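/- Let γ > 2 and fix 0 < S_min ≤ S_max < 1. There exist positive constants C and D depending only on γ, S_min, S_max such that for every ε ∈ (0, 1/4], every S_D ∈ [S_min, S_max], and every s ∈ [0,1], one has E_{1,ε}^γ(s) ≥ C · Z_ε(s)^{2-γ} − D, where E_{1,ε}^γ(s) = s ∫_{S_D}^s Z_ε(ξ)^{-γ} dξ − ∫_{S_D}^s ξ Z_ε(ξ)^{-γ} dξ. -/

import Mathlib

/-- The cutting function `Z(s) = min(max(s,0),1)`. -/
noncomputable def Z (s : ℝ) : ℝ := min (max s 0) 1

/-- The regularized cutting function `Z_ε(s) = (1−2ε)Z(s) + ε`. -/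
noncomputable def Zeps (ε s : ℝ) : ℝ := (1 - 2 * ε) * Z s + ε

/-- The first component of the regularized entropy with base point `S_D`:
`E_{1,ε}^γ(s) = s ∫_{S_D}^s Z_ε(ξ)^{-γ} dξ − ∫_{S_D}^s ξ Z_ε(ξ)^{-γ} dξ`. -/
noncomputable def E1 (γ ε SD s : ℝ) : ℝ :=
  s * (∫ ξ in SD..s, Zeps ε ξ ^ (-γ)) - ∫ ξ in SD..s, ξ * Zeps ε ξ ^ (-γ)

/-!
On `[0, 1]` the regularization `Z_ε` is the affine map `ξ ↦ (1 - 2ε) ξ + ε`, so the substitution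
`u = Z_ε(ξ)` turns `E_{1,ε}^γ(s)` into `(1 - 2ε)⁻² ∫_b^a (a - u) u^{-γ} du` with `a = Z_ε(s)` and
`b = Z_ε(S_D)`. This integral equals
`a^{2-γ} / ((γ-1)(γ-2)) + a b^{1-γ} / (γ-1) - b^{2-γ} / (γ-2)`; the middle term is nonnegative,
and `b ≥ S_min / 2` bounds the last one uniformly, while `(1 - 2ε)⁻² ∈ [1, 4]` for `ε ≤ 1/4`.
-/

open Real Set intervalIntegral

lemma mul_integral_sub_integral_mul {f : ℝ → ℝ} {a b : ℝ}
    (hf : IntervalIntegrable f MeasureTheory.volume a b) (s : ℝ) :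
    s * (∫ ξ in a..b, f ξ) - ∫ ξ in a..b, ξ * f ξ = ∫ ξ in a..b, (s - ξ) * f ξ := by
  rw [← integral_const_mul, ← integral_sub (hf.const_mul s)
    (hf.continuousOn_mul (g := fun ξ => ξ) continuousOn_id)]
  simp only [sub_mul]

theorem integral_sub_mul_rpow_neg {γ a b : ℝ} (hγ1 : γ ≠ 1) (hγ2 : γ ≠ 2) (ha : 0 < a)
    (hb : 0 < b) :
    ∫ u in b..a, (a - u) * u ^ (-γ) =
      ((γ - 1) * (γ - 2))⁻¹ * a ^ (2 - γ) + (γ - 1)⁻¹ * a * b ^ (1 - γ)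
        - (γ - 2)⁻¹ * b ^ (2 - γ) := by
  have hpos : ∀ u ∈ uIcc b a, 0 < u := fun u hu => lt_of_lt_of_le (lt_min hb ha) hu.1
  have h0 : (0 : ℝ) ∉ uIcc b a := fun h => (hpos 0 h).false
  have hcont : ContinuousOn (fun u : ℝ => u ^ (-γ)) (uIcc b a) := fun u hu =>
    (continuousAt_rpow_const u _ (Or.inl (hpos u hu).ne')).continuousWithinAt
  have hmul : ∫ u in b..a, u * u ^ (-γ) = ∫ u in b..a, u ^ (1 - γ) :=
    integral_congr fun u hu => by
      rw [sub_eq_add_neg, rpow_add (hpos u hu), rpow_one]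
  rw [← mul_integral_sub_integral_mul hcont.intervalIntegrable, hmul,
    integral_rpow (Or.inr ⟨by contrapose! hγ1; linarith, h0⟩),
    integral_rpow (Or.inr ⟨by contrapose! hγ2; linarith, h0⟩),
    show -γ + 1 = 1 - γ by ring, show 1 - γ + 1 = 2 - γ by ring,
    show 2 - γ = 1 + (1 - γ) by ring, rpow_add ha, rpow_add hb, rpow_one, rpow_one]
  have : γ - 1 ≠ 0 := sub_ne_zero.mpr hγ1
  have : γ - 2 ≠ 0 := sub_ne_zero.mpr hγ2
  have : 1 - γ ≠ 0 := by contrapose! hγ1; linarith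
  have : 1 + (1 - γ) ≠ 0 := by contrapose! hγ2; linarith
  field_simp
  ring

theorem integral_sub_mul_rpow_neg_ge {γ a b : ℝ} (hγ1 : 1 < γ) (hγ2 : γ ≠ 2) (ha : 0 < a)
    (hb : 0 < b) :
    ((γ - 1) * (γ - 2))⁻¹ * a ^ (2 - γ) - (γ - 2)⁻¹ * b ^ (2 - γ) ≤
      ∫ u in b..a, (a - u) * u ^ (-γ) := by
  have : 0 < γ - 1 := sub_pos.mpr hγ1
  have : 0 ≤ (γ - 1)⁻¹ * a * b ^ (1 - γ) := by positivity
  rw [integral_sub_mul_rpow_neg hγ1.ne' hγ2 ha hb]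
  linarith

lemma Zeps_of_mem_Icc {ε s : ℝ} (hs : s ∈ Icc (0 : ℝ) 1) : Zeps ε s = (1 - 2 * ε) * s + ε := by
  rw [Zeps, Z, max_eq_left hs.1, min_eq_left hs.2]

lemma Zeps_pos {ε : ℝ} (hε : 0 < ε) (hε' : ε ≤ 1 / 2) (s : ℝ) : 0 < Zeps ε s := by
  have : 0 ≤ Z s := le_min (le_max_right s 0) zero_le_one
  unfold Zeps
  nlinarith

lemma continuous_Zeps (ε : ℝ) : Continuous (Zeps ε) := by
  unfold Zeps Z
  fun_prop

theorem E1_eq_integral {γ ε SD s : ℝ} (hε : 0 < ε) (hε' : ε < 1 / 2) (hSD : SD ∈ Icc (0 : ℝ) 1)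
    (hs : s ∈ Icc (0 : ℝ) 1) :
    E1 γ ε SD s =
      ((1 - 2 * ε) ^ 2)⁻¹ * ∫ u in Zeps ε SD..Zeps ε s, (Zeps ε s - u) * u ^ (-γ) := by
  have hk : 1 - 2 * ε ≠ 0 := by linarith
  have hint : IntervalIntegrable (fun ξ => Zeps ε ξ ^ (-γ)) MeasureTheory.volume SD s :=
    ((continuous_Zeps ε).rpow_const fun ξ =>
      Or.inl (Zeps_pos hε hε'.le ξ).ne').intervalIntegrable _ _
  have haffine : ∫ ξ in SD..s, (s - ξ) * Zeps ε ξ ^ (-γ) =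
      ∫ ξ in SD..s, (1 - 2 * ε)⁻¹ *
        (fun u => (Zeps ε s - u) * u ^ (-γ)) ((1 - 2 * ε) * ξ + ε) :=
    integral_congr fun ξ hξ => by
      rw [Zeps_of_mem_Icc (uIcc_subset_Icc hSD hs hξ), Zeps_of_mem_Icc hs]
      field_simp
      ring
  rw [E1, mul_integral_sub_integral_mul hint, haffine, integral_const_mul,
    integral_comp_mul_add (fun u => (Zeps ε s - u) * u ^ (-γ)) hk, ← Zeps_of_mem_Icc hSD,
    ← Zeps_of_mem_Icc hs, smul_eq_mul, ← mul_assoc, ← mul_inv, sq]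

theorem E1_lower_bound_on_unit_interval_general
    (γ : ℝ) (hγ : 2 < γ)
    (Smin Smax : ℝ) (h0 : 0 < Smin) (h2 : Smax < 1) :
    ∃ C > (0:ℝ), ∃ D > (0:ℝ),
      ∀ ε ∈ Set.Ioc (0:ℝ) (1/4), ∀ SD ∈ Set.Icc Smin Smax, ∀ s ∈ Set.Icc (0:ℝ) 1,
        E1 γ ε SD s ≥ C * Zeps ε s ^ (2 - γ) - D := by
  have hγ1 : 0 < γ - 1 := by linarith
  have hγ2 : 0 < γ - 2 := by linarith
  refine ⟨((γ - 1) * (γ - 2))⁻¹, by positivity, 4 * ((γ - 2)⁻¹ * (Smin / 2) ^ (2 - γ)),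
    by positivity, ?_⟩
  rintro ε ⟨hε, hε4⟩ SD ⟨hSDmin, hSDmax⟩ s hs
  have hSD : SD ∈ Icc (0 : ℝ) 1 := ⟨by linarith, by linarith⟩
  have hb : Smin / 2 ≤ Zeps ε SD := by
    rw [Zeps_of_mem_Icc hSD]
    nlinarith
  have hb_pow : Zeps ε SD ^ (2 - γ) ≤ (Smin / 2) ^ (2 - γ) :=
    rpow_le_rpow_of_nonpos (by positivity) hb (by linarith)
  have hintegral := integral_sub_mul_rpow_neg_ge (γ := γ) (by linarith) (by linarith)
    (Zeps_pos hε (by linarith) s) (Zeps_pos hε (by linarith) SD)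
  have ha_term : 0 ≤ ((γ - 1) * (γ - 2))⁻¹ * Zeps ε s ^ (2 - γ) :=
    mul_nonneg (by positivity) (rpow_nonneg (Zeps_pos hε (by linarith) s).le _)
  have hb_term : 0 ≤ (γ - 2)⁻¹ * Zeps ε SD ^ (2 - γ) :=
    mul_nonneg (by positivity) (rpow_nonneg (Zeps_pos hε (by linarith) SD).le _)
  have hK1 : 1 ≤ ((1 - 2 * ε) ^ 2)⁻¹ := one_le_inv₀ (by nlinarith) |>.mpr (by nlinarith)
  have hK4 : ((1 - 2 * ε) ^ 2)⁻¹ ≤ 4 := inv_le_of_inv_le₀ (by norm_num) (by nlinarith)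
  rw [E1_eq_integral hε (by linarith) hSD hs, ge_iff_le]
  calc _ ≤ ((1 - 2 * ε) ^ 2)⁻¹ *
        (((γ - 1) * (γ - 2))⁻¹ * Zeps ε s ^ (2 - γ) - (γ - 2)⁻¹ * Zeps ε SD ^ (2 - γ)) := by
        have : (γ - 2)⁻¹ * Zeps ε SD ^ (2 - γ) ≤ (γ - 2)⁻¹ * (Smin / 2) ^ (2 - γ) :=
          mul_le_mul_of_nonneg_left hb_pow (by positivity)
        nlinarith
    _ ≤ _ := mul_le_mul_of_nonneg_left hintegral (by linarith)

/-- The Case 1 lower bound of the Appendix of the paper: for `γ > 2` and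
`0 < S_min ≤ S_max < 1` there are constants `C, D > 0` depending only on
`γ, S_min, S_max` such that for all `ε ∈ (0,1/4]`, `S_D ∈ [S_min, S_max]` and
`s ∈ [0,1]`, one has `E_{1,ε}^γ(s) ≥ C Z_ε(s)^{2−γ} − D`. -/
theorem E1_lower_bound_on_unit_interval
    (γ : ℝ) (hγ : 2 < γ)
    (Smin Smax : ℝ) (h0 : 0 < Smin) (h1 : Smin ≤ Smax) (h2 : Smax < 1) :
    ∃ C > (0:ℝ), ∃ D > (0:ℝ),
      ∀ ε ∈ Set.Ioc (0:ℝ) (1/4), ∀ SD ∈ Set.Icc Smin Smax, ∀ s ∈ Set.Icc (0:ℝ) 1,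
        E1 γ ε SD s ≥ C * Zeps ε s ^ (2 - γ) - D :=
  E1_lower_bound_on_unit_interval_general γ hγ Smin Smax h0 h2
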